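/- arXiv:2503.20054 — 2 statements merged into one kernel-verified Lean document; each statement's English description precedes it below -/
import Mathlib

section
/- Duality for linear programs over simple coverings: Let N be a positive integer and b_{k,l} real numbers for 1 ≤ k ≤ l ≤ N. The system of inequalities Σ_{s=k}^{l} y_s ≤ b_{k,l} (for all 1 ≤ k ≤ l ≤ N) subject to Σ_{s=1}^{N} y_s = 0 has a real solution (y_1,...,y_N) if and only if Σ_{i=1}^{m-1} b_{k_i, k_{i+1}-1} ≥ 0 for every increasing sequence of integers 1 = k_1 < k_2 < ... < k_m = N+1. -/
/-!
A feasible `y` pays at most `b_{k_i, k_{i+1}-1}` on each block of a simple covering, and the blocks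
partition `{1, …, N}`, so every covering sum is at least `Σ y_s = 0`.

Conversely, view the covering sums as path lengths in the acyclic graph on the cut points, and let
`d l` be the least covering sum of `{1, …, l}`, computed by the dynamic programme
`d 0 = 0`, `d l = min_{j < l} (d j + b_{j+1, l})`. The hypothesis gives `d N ≥ 0`, so the
potential `P = d` on `[0, N)`, `P N = 0` satisfies the difference constraints
`P l - P j ≤ b_{j+1, l}`, and `y_s = P s - P (s - 1)` solves the system.
-/

open Finset

def IsSimpleCovering (N m : ℕ) (k : ℕ → ℕ) : Prop :=
  StrictMonoOn k (Set.Icc 1 m) ∧ k 1 = 1 ∧ k m = N + 1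

def coveringSum (b : ℕ → ℕ → ℝ) (m : ℕ) (k : ℕ → ℕ) : ℝ :=
  ∑ i ∈ Ico 1 m, b (k i) (k (i + 1) - 1)

def IsFeasible (N : ℕ) (b : ℕ → ℕ → ℝ) (y : ℕ → ℝ) : Prop :=
  (∀ k l : ℕ, 1 ≤ k → k ≤ l → l ≤ N → ∑ s ∈ Icc k l, y s ≤ b k l) ∧
    ∑ s ∈ Icc 1 N, y s = 0

theorem sum_Ico_sum_Ico_of_monotoneOn {M : Type*} [AddCommMonoid M] (f : ℕ → M) {k : ℕ → ℕ}
    {a n : ℕ} (han : a ≤ n) (hk : MonotoneOn k (Set.Icc a n)) :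
    ∑ i ∈ Ico a n, ∑ s ∈ Ico (k i) (k (i + 1)), f s = ∑ s ∈ Ico (k a) (k n), f s := by
  induction n, han using Nat.le_induction with
  | base => simp
  | succ n han ih =>
    rw [sum_Ico_succ_top han, ih (hk.mono (Set.Icc_subset_Icc_right n.le_succ)),
      sum_Ico_consecutive]
    · exact hk ⟨le_rfl, by omega⟩ ⟨han, by omega⟩ han
    · exact hk ⟨han, by omega⟩ ⟨by omega, le_rfl⟩ n.le_succ

theorem sum_Icc_sub_pred {G : Type*} [AddCommGroup G] (P : ℕ → G) {j l : ℕ} (hjl : j ≤ l) :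
    ∑ s ∈ Icc (j + 1) l, (P s - P (s - 1)) = P l - P j := by
  induction l, hjl using Nat.le_induction with
  | base => simp
  | succ l hjl ih => rw [sum_Icc_succ_top (by omega), ih]; simp

theorem IsFeasible.coveringSum_nonneg {N m : ℕ} {b : ℕ → ℕ → ℝ} {y : ℕ → ℝ} {k : ℕ → ℕ}
    (hy : IsFeasible N b y) (hm : 1 ≤ m) (hk : IsSimpleCovering N m k) :
    0 ≤ coveringSum b m k := by
  obtain ⟨hmono, hk1, hkm⟩ := hk
  calc (0 : ℝ) = ∑ s ∈ Ico (k 1) (k m), y s := by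
        rw [hk1, hkm, Ico_add_one_right_eq_Icc, hy.2]
    _ = ∑ i ∈ Ico 1 m, ∑ s ∈ Ico (k i) (k (i + 1)), y s :=
        (sum_Ico_sum_Ico_of_monotoneOn y hm hmono.monotoneOn).symm
    _ ≤ coveringSum b m k := by
        refine sum_le_sum fun i hi => ?_
        obtain ⟨hi1, him⟩ := mem_Ico.1 hi
        have hlt : k i < k (i + 1) := hmono ⟨hi1, him.le⟩ ⟨by omega, him⟩ i.lt_succ_self
        have hk1i : k 1 ≤ k i := hmono.monotoneOn ⟨le_rfl, hm⟩ ⟨hi1, him.le⟩ hi1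
        have hkim : k (i + 1) ≤ k m := hmono.monotoneOn ⟨by omega, him⟩ ⟨hm, le_rfl⟩ him
        rw [← Nat.sub_add_cancel (by omega : 1 ≤ k (i + 1)), Ico_add_one_right_eq_Icc,
          Nat.add_sub_cancel]
        exact hy.1 _ _ (hk1 ▸ hk1i) (by omega) (by omega)

theorem isFeasible_of_potential {N : ℕ} {b : ℕ → ℕ → ℝ} {P : ℕ → ℝ} (hP0 : P 0 = 0)
    (hPN : P N = 0) (hP : ∀ j l, j < l → l ≤ N → P l - P j ≤ b (j + 1) l) :
    IsFeasible N b fun s => P s - P (s - 1) := by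
  refine ⟨fun k l hk hkl hlN => ?_, ?_⟩
  · obtain ⟨j, rfl⟩ : ∃ j, k = j + 1 := ⟨k - 1, by omega⟩
    rw [sum_Icc_sub_pred P (by omega)]
    exact hP j l (by omega) hlN
  · rw [sum_Icc_sub_pred P N.zero_le, hP0, hPN, sub_zero]

noncomputable def minCoveringSum (b : ℕ → ℕ → ℝ) : ℕ → ℝ
  | 0 => 0
  | l + 1 => univ.inf' univ_nonempty fun j : Fin (l + 1) => minCoveringSum b j + b (j + 1) (l + 1)

theorem minCoveringSum_zero (b : ℕ → ℕ → ℝ) : minCoveringSum b 0 = 0 := by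
  rw [minCoveringSum]

theorem minCoveringSum_le (b : ℕ → ℕ → ℝ) {j l : ℕ} (hjl : j < l) :
    minCoveringSum b l ≤ minCoveringSum b j + b (j + 1) l := by
  obtain ⟨l, rfl⟩ : ∃ l', l = l' + 1 := ⟨l - 1, by omega⟩
  rw [minCoveringSum]
  exact inf'_le _ (mem_univ (⟨j, hjl⟩ : Fin (l + 1)))

theorem exists_minCoveringSum_eq (b : ℕ → ℕ → ℝ) {l : ℕ} (hl : 0 < l) :
    ∃ j < l, minCoveringSum b l = minCoveringSum b j + b (j + 1) l := by
  obtain ⟨l, rfl⟩ : ∃ l', l = l' + 1 := ⟨l - 1, by omega⟩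
  obtain ⟨j, -, hj⟩ := exists_mem_eq_inf' (univ_nonempty (α := Fin (l + 1)))
    fun j : Fin (l + 1) => minCoveringSum b j + b (j + 1) (l + 1)
  exact ⟨j, j.2, by rw [minCoveringSum]; exact hj⟩

theorem IsSimpleCovering.update {j l m : ℕ} {k : ℕ → ℕ} (hk : IsSimpleCovering j m k)
    (hm : 1 ≤ m) (hjl : j < l) :
    IsSimpleCovering l (m + 1) (Function.update k (m + 1) (l + 1)) := by
  obtain ⟨hmono, hk1, hkm⟩ := hk
  refine ⟨fun x hx y hy hxy => ?_, by simp [Function.update_of_ne (by omega : 1 ≠ m + 1), hk1],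
    by simp⟩
  have hxm : x ≤ m := by have := hy.2; omega
  rw [Function.update_of_ne (by omega)]
  rcases eq_or_lt_of_le hy.2 with rfl | hym
  · rw [Function.update_self]
    have := hmono.monotoneOn ⟨hx.1, hxm⟩ ⟨hm, le_rfl⟩ hxm
    omega
  · rw [Function.update_of_ne (by omega)]
    exact hmono ⟨hx.1, hxm⟩ ⟨hy.1, by omega⟩ hxy

theorem coveringSum_update (b : ℕ → ℕ → ℝ) {m : ℕ} (k : ℕ → ℕ) (c : ℕ) (hm : 1 ≤ m) :
    coveringSum b (m + 1) (Function.update k (m + 1) c) = coveringSum b m k + b (k m) (c - 1) := by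
  rw [coveringSum, sum_Ico_succ_top hm, Function.update_self,
    Function.update_of_ne (by omega : m ≠ m + 1)]
  congr 1
  refine sum_congr rfl fun i hi => ?_
  have := (mem_Ico.1 hi).2
  rw [Function.update_of_ne (by omega), Function.update_of_ne (by omega)]

theorem exists_isSimpleCovering_coveringSum_eq (b : ℕ → ℕ → ℝ) (l : ℕ) :
    ∃ m k, 1 ≤ m ∧ IsSimpleCovering l m k ∧ coveringSum b m k = minCoveringSum b l := by
  induction l using Nat.strong_induction_on with
  | _ l ih =>
    rcases l.eq_zero_or_pos with rfl | hl
    · refine ⟨1, fun _ => 1, le_rfl, ⟨?_, rfl, rfl⟩, by simp [coveringSum, minCoveringSum_zero]⟩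
      exact (Set.subsingleton_Icc_of_ge le_rfl).strictMonoOn _
    · obtain ⟨j, hjl, hj⟩ := exists_minCoveringSum_eq b hl
      obtain ⟨m, k, hm, hk, hsum⟩ := ih j hjl
      refine ⟨m + 1, _, by omega, hk.update hm hjl, ?_⟩
      rw [coveringSum_update b k _ hm, hsum, hk.2.2, hj, Nat.add_sub_cancel]

theorem minCoveringSum_nonneg {N : ℕ} {b : ℕ → ℕ → ℝ}
    (H : ∀ m k, 2 ≤ m → IsSimpleCovering N m k → 0 ≤ coveringSum b m k) :
    0 ≤ minCoveringSum b N := by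
  obtain ⟨m, k, hm, hk, hsum⟩ := exists_isSimpleCovering_coveringSum_eq b N
  rcases N.eq_zero_or_pos with rfl | hN
  · rw [minCoveringSum_zero]
  · have hm1 : m ≠ 1 := by
      rintro rfl
      have := hk.2.1.symm.trans hk.2.2
      omega
    exact hsum ▸ H m k (by omega) hk

theorem exists_isFeasible_of_minCoveringSum_nonneg {N : ℕ} {b : ℕ → ℕ → ℝ}
    (h : 0 ≤ minCoveringSum b N) : ∃ y, IsFeasible N b y := by
  set P := Function.update (minCoveringSum b) N 0
  have hP0 : P 0 = 0 := by simp [P, Function.update_apply, minCoveringSum_zero]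
  have hP_le (l : ℕ) : P l ≤ minCoveringSum b l := by
    rcases eq_or_ne l N with rfl | hlN
    · simpa [P] using h
    · exact (Function.update_of_ne hlN _ _).le
  refine ⟨_, isFeasible_of_potential hP0 (Function.update_self ..) fun j l hjl hlN => ?_⟩
  have hPj : P j = minCoveringSum b j := Function.update_of_ne (by omega) _ _
  linarith [hP_le l, minCoveringSum_le b hjl]

theorem lp_duality_simple_coverings_general (N : ℕ) (b : ℕ → ℕ → ℝ) :
    (∃ y : ℕ → ℝ,
      (∀ k l : ℕ, 1 ≤ k → k ≤ l → l ≤ N → ∑ s ∈ Finset.Icc k l, y s ≤ b k l) ∧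
      ∑ s ∈ Finset.Icc 1 N, y s = 0) ↔
    ∀ (m : ℕ) (k : ℕ → ℕ), 2 ≤ m → StrictMonoOn k (Set.Icc 1 m) →
      k 1 = 1 → k m = N + 1 →
      0 ≤ ∑ i ∈ Finset.Ico 1 m, b (k i) (k (i + 1) - 1) := by
  constructor
  · rintro ⟨y, hy⟩ m k hm hmono hk1 hkm
    exact IsFeasible.coveringSum_nonneg hy (by omega) ⟨hmono, hk1, hkm⟩
  · intro H
    exact exists_isFeasible_of_minCoveringSum_nonneg
      (minCoveringSum_nonneg fun m k hm hk => H m k hm hk.1 hk.2.1 hk.2.2)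

/-- Duality for linear programs over simple coverings: the system
`Σ_{s=k}^l y_s ≤ b_{k,l}` (for `1 ≤ k ≤ l ≤ N`) with `Σ_{s=1}^N y_s = 0` is solvable
iff `Σ_{i=1}^{m-1} b_{k_i, k_{i+1}-1} ≥ 0` for every increasing sequence
`1 = k_1 < k_2 < ... < k_m = N+1`. -/
theorem lp_duality_simple_coverings (N : ℕ) (hN : 1 ≤ N) (b : ℕ → ℕ → ℝ) :
    (∃ y : ℕ → ℝ,
      (∀ k l : ℕ, 1 ≤ k → k ≤ l → l ≤ N → ∑ s ∈ Finset.Icc k l, y s ≤ b k l) ∧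
      ∑ s ∈ Finset.Icc 1 N, y s = 0) ↔
    ∀ (m : ℕ) (k : ℕ → ℕ), 2 ≤ m → StrictMonoOn k (Set.Icc 1 m) →
      k 1 = 1 → k m = N + 1 →
      0 ≤ ∑ i ∈ Finset.Ico 1 m, b (k i) (k (i + 1) - 1) :=
  lp_duality_simple_coverings_general N b
end

section
/- Helly selection principle for premeasures: Let h : [0,1] → ℝ₊ be continuous and increasing with h(0) = 0, and {σ_n} a sequence of normalized premeasures on 𝕋 with σ_n(I) ≤ h(|I|) for all arcs I. Then there is a subsequence {σ_{n_k}}, a real constant c, and a normalized premeasure σ with σ(I) ≤ h(|I|) for all arcs I, such that limsup_k |ρ_{σ_{n_k}}(t) - ρ_σ(t) - c| ≤ J_{ρ_σ}(t) for all t ∈ (0,2π), and ∫ g dσ_{n_k} → ∫ g dσ for every smooth g : 𝕋 → ℂ. -/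
open Set Filter MeasureTheory
open scoped Real Topology

private lemma le_add_eps {a b : ℝ} (H : ∀ ε > 0, a ≤ b + ε) : a ≤ b := by
  by_contra hc; push_neg at hc
  have := H ((a-b)/2) (by linarith); linarith

private lemma trap_tendsto (u : ℝ → ℝ) (l : Filter ℝ) [l.NeBot]
    (trap : ∀ ε > 0, ∃ E ∈ l, ∃ lo : ℝ, ∀ q ∈ E, u q ∈ Icc lo (lo + ε)) :
    ∃ L, Tendsto u l (𝓝 L) := by
  have hc : Cauchy (Filter.map u l) := by
    rw [Metric.cauchy_iff]
    refine ⟨Filter.NeBot.map ‹_› u, fun ε hε => ?_⟩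
    obtain ⟨E, hE, lo, hlo⟩ := trap (ε/3) (by linarith)
    refine ⟨u '' E, Filter.image_mem_map hE, ?_⟩
    rintro x ⟨q, hq, rfl⟩ y ⟨r, hr, rfl⟩
    have h1 := hlo q hq; have h2 := hlo r hr
    simp only [Set.mem_Icc] at h1 h2
    rw [Real.dist_eq]
    rcases abs_cases (u q - u r) with ⟨e1, _⟩ | ⟨e1, _⟩ <;> linarith
  obtain ⟨L, hL⟩ := CompleteSpace.complete hc
  exact ⟨L, hL⟩

private lemma near_of_neBot {S : Set ℝ} {t δ : ℝ} (hδ : 0 < δ)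
    (hne : (𝓝[S] t).NeBot) : ∃ q ∈ S, |q - t| < δ := by
  have ht : t ∈ closure S := mem_closure_iff_nhdsWithin_neBot.mpr hne
  obtain ⟨q, hq, hd⟩ := Metric.mem_closure_iff.mp ht δ hδ
  exact ⟨q, hq, by rwa [abs_sub_comm, ← Real.dist_eq]⟩

private lemma exists_left_limit (f : ℝ → ℝ) (S : Set ℝ) (t M : ℝ)
    (hne : (𝓝[S ∩ Iio t] t).NeBot)
    (hb : ∀ q ∈ S, |f q| ≤ M)
    (rise : ∀ ε > 0, ∃ δ > 0, ∀ q ∈ S, ∀ r ∈ S, q < r → r - q < δ → f r ≤ f q + ε) :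
    ∃ L, Tendsto f (𝓝[S ∩ Iio t] t) (𝓝 L) := by
  have := hne
  apply trap_tendsto
  intro ε hε
  obtain ⟨δ, hδ, hrise⟩ := rise (ε/2) (by linarith)
  obtain ⟨q1, hq1, hq1d⟩ := near_of_neBot (δ := min δ 1 / 2) (by positivity) hne
  have hq1S : q1 ∈ S ∩ Ioo (t - δ) t := by
    refine ⟨hq1.1, ?_, hq1.2⟩
    have h2 : min δ 1 / 2 ≤ δ := by
      have := min_le_left δ (1:ℝ); linarith [min_le_left δ (1:ℝ)]
    rcases abs_lt.mp hq1d with ⟨hl, _⟩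
    linarith
  have hne2 : (f '' (S ∩ Ioo (t - δ) t)).Nonempty := ⟨f q1, q1, hq1S, rfl⟩
  have hbdd : BddBelow (f '' (S ∩ Ioo (t - δ) t)) := by
    refine ⟨-M, ?_⟩
    rintro y ⟨q, hq, rfl⟩
    have := hb q hq.1
    rcases abs_le.mp this with ⟨h1, _⟩; exact h1
  set a := sInf (f '' (S ∩ Ioo (t - δ) t)) with ha
  obtain ⟨y, ⟨q0, hq0, rfl⟩, hy⟩ := Real.lt_sInf_add_pos hne2 (show (0:ℝ) < ε/2 by linarith)
  refine ⟨S ∩ Ioo q0 t, ?_, a, ?_⟩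
  · apply mem_nhdsWithin.2
    refine ⟨Ioo q0 (t+1), isOpen_Ioo, ⟨hq0.2.2, by linarith⟩, ?_⟩
    rintro x ⟨hx1, hx2⟩
    exact ⟨hx2.1, hx1.1, hx2.2⟩
  · rintro q ⟨hqS, hq⟩
    have hqmem : q ∈ S ∩ Ioo (t - δ) t := ⟨hqS, lt_trans hq0.2.1 hq.1, hq.2⟩
    constructor
    · exact csInf_le hbdd ⟨q, hqmem, rfl⟩
    · have := hrise q0 hq0.1 q hqS hq.1 (by rcases hq0.2 with ⟨e1,e2⟩; rcases hq with ⟨e3,e4⟩; linarith)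
      linarith

private lemma exists_right_limit (f : ℝ → ℝ) (S : Set ℝ) (t M : ℝ)
    (hne : (𝓝[S ∩ Ioi t] t).NeBot)
    (hb : ∀ q ∈ S, |f q| ≤ M)
    (rise : ∀ ε > 0, ∃ δ > 0, ∀ q ∈ S, ∀ r ∈ S, q < r → r - q < δ → f r ≤ f q + ε) :
    ∃ L, Tendsto f (𝓝[S ∩ Ioi t] t) (𝓝 L) := by
  have := hne
  apply trap_tendsto
  intro ε hε
  obtain ⟨δ, hδ, hrise⟩ := rise (ε/2) (by linarith)
  obtain ⟨q1, hq1, hq1d⟩ := near_of_neBot (δ := min δ 1 / 2) (by positivity) hne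
  have hq1S : q1 ∈ S ∩ Ioo t (t + δ) := by
    refine ⟨hq1.1, hq1.2, ?_⟩
    rcases abs_lt.mp hq1d with ⟨_, hr⟩
    have h2 : min δ 1 / 2 ≤ δ := by linarith [min_le_left δ (1:ℝ)]
    linarith
  have hne2 : (f '' (S ∩ Ioo t (t + δ))).Nonempty := ⟨f q1, q1, hq1S, rfl⟩
  have hbdd : BddAbove (f '' (S ∩ Ioo t (t + δ))) := by
    refine ⟨M, ?_⟩
    rintro y ⟨q, hq, rfl⟩
    exact (abs_le.mp (hb q hq.1)).2
  set b := sSup (f '' (S ∩ Ioo t (t + δ))) with hbdef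
  obtain ⟨y, ⟨q0, hq0, rfl⟩, hy⟩ := exists_lt_of_lt_csSup hne2 (show b - ε/2 < b by linarith)
  refine ⟨S ∩ Ioo t q0, ?_, b - ε, ?_⟩
  · apply mem_nhdsWithin.2
    refine ⟨Ioo (t-1) q0, isOpen_Ioo, ⟨by linarith, hq0.2.1⟩, ?_⟩
    rintro x ⟨hx1, hx2⟩
    exact ⟨hx2.1, hx2.2, hx1.2⟩
  · rintro q ⟨hqS, hq⟩
    have hqmem : q ∈ S ∩ Ioo t (t + δ) := ⟨hqS, hq.1, by rcases hq0.2 with ⟨e1,e2⟩; linarith [hq.2]⟩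
    constructor
    · have := hrise q hqS q0 hq0.1 hq.2 (by rcases hq0.2 with ⟨e1,e2⟩; rcases hq with ⟨e3,e4⟩; linarith)
      linarith
    · have := le_csSup hbdd (⟨q, hqmem, rfl⟩ : f q ∈ f '' (S ∩ Ioo t (t + δ)))
      linarith

private lemma aemeas_of_leftCont (u : ℝ → ℝ) (A : Set ℝ) (hA : MeasurableSet A)
    (hu : ∀ t ∈ A, Tendsto u (𝓝[<] t) (𝓝 (u t))) :
    AEMeasurable u (volume.restrict A) := by
  set s : ℕ → ℝ → ℝ := fun m t => ((⌈(m+1 : ℝ) * t⌉ : ℝ) - 1)/(m+1) with hs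
  have hmeas : ∀ m, Measurable (fun t => u (s m t)) := by
    intro m
    have h1 : Measurable (fun t : ℝ => (⌈(m+1 : ℝ) * t⌉ : ℤ)) :=
      Int.measurable_ceil.comp (measurable_const.mul measurable_id)
    exact (measurable_of_countable (fun z : ℤ => u (((z:ℝ) - 1)/(m+1)))).comp h1
  have hlt : ∀ (m : ℕ) (t : ℝ), s m t < t := by
    intro m t
    have hm : (0:ℝ) < (m:ℝ) + 1 := by positivity
    rw [hs]
    simp only
    rw [div_lt_iff₀ hm]
    have := Int.ceil_lt_add_one ((m+1:ℝ) * t)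
    push_cast at this ⊢
    nlinarith
  have hge : ∀ (m : ℕ) (t : ℝ), t - 1/((m:ℝ)+1) ≤ s m t := by
    intro m t
    have hm : (0:ℝ) < (m:ℝ) + 1 := by positivity
    rw [hs]
    simp only
    rw [le_div_iff₀ hm]
    have := Int.le_ceil ((m+1:ℝ) * t)
    push_cast at this ⊢
    have h2 : (1/((m:ℝ)+1)) * ((m:ℝ)+1) = 1 := by field_simp
    nlinarith [h2]
  have hlim : ∀ t ∈ A, Tendsto (fun m => u (s m t)) atTop (𝓝 (u t)) := by
    intro t ht
    apply (hu t ht).comp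
    apply tendsto_nhdsWithin_of_tendsto_nhds_of_eventually_within
    · apply tendsto_of_tendsto_of_tendsto_of_le_of_le (g := fun m : ℕ => t - 1/((m:ℝ)+1))
        (h := fun _ : ℕ => t)
      · have h1 : Tendsto (fun m : ℕ => 1/((m:ℝ)+1)) atTop (𝓝 0) :=
          tendsto_one_div_add_atTop_nhds_zero_nat
        have := (tendsto_const_nhds (x := t) (f := atTop (α := ℕ))).sub h1
        simpa using this
      · exact tendsto_const_nhds
      · exact fun m => hge m t
      · exact fun m => (hlt m t).le
    · exact Eventually.of_forall fun m => hlt m t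
  exact aemeasurable_of_tendsto_metrizable_ae atTop (fun m => (hmeas m).aemeasurable)
    (by filter_upwards [ae_restrict_mem hA] with t ht using hlim t ht)

/-- The primitive `ρ(t) = σ([1, e^{it}))` of a normalized premeasure `σ` on `𝕋`. -/
def IsPremeasurePrimitive (ρ : ℝ → ℝ) : Prop :=
  (∀ t ∈ Set.Ioc (0:ℝ) (2 * π), Tendsto ρ (nhdsWithin t (Set.Iio t)) (nhds (ρ t))) ∧
  (∀ t ∈ Set.Ico (0:ℝ) (2 * π), ∃ L : ℝ, Tendsto ρ (nhdsWithin t (Set.Ioi t)) (nhds L)) ∧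
  ρ (2 * π) = 0

/-- The premeasure with primitive `ρ` satisfies `σ(I) ≤ h(|I|)` for all arcs `I`
(`|I|` is normalized so that `|𝕋| = 1`); both non-wrapping and wrapping arcs. -/
def ArcBound (h : ℝ → ℝ) (ρ : ℝ → ℝ) : Prop :=
  ∀ s t : ℝ, 0 < s → s ≤ t → t ≤ 2 * π →
    ρ t - ρ s ≤ h ((t - s) / (2 * π)) ∧ ρ s - ρ t ≤ h (1 - (t - s) / (2 * π))

set_option maxHeartbeats 2000000

/-- Helly selection principle for normalized premeasures obeying `σ_n(I) ≤ h(|I|)`: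
a subsequence converges, up to an additive constant `c` and up to the jumps of the limit,
to a normalized premeasure `σ` with `σ(I) ≤ h(|I|)`, and the integrals
`∫ g dσ_{n_k} = -∫ g'(t) ρ_{n_k}(t) dt` converge to `∫ g dσ` for all smooth `g`. -/
theorem helly_selection_premeasures (h : ℝ → ℝ)
    (hcont : ContinuousOn h (Set.Icc 0 1)) (hmono : MonotoneOn h (Set.Icc 0 1))
    (h0 : h 0 = 0) (hpos : ∀ x ∈ Set.Icc (0:ℝ) 1, 0 ≤ h x)
    (ρseq : ℕ → ℝ → ℝ) (hprim : ∀ n, IsPremeasurePrimitive (ρseq n))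
    (hbd : ∀ n, ArcBound h (ρseq n)) :
    ∃ φ : ℕ → ℕ, StrictMono φ ∧ ∃ (c : ℝ) (ρ : ℝ → ℝ),
      IsPremeasurePrimitive ρ ∧ ArcBound h ρ ∧
      (∀ t ∈ Set.Ioo (0:ℝ) (2 * π), ∀ L : ℝ,
        Tendsto ρ (nhdsWithin t (Set.Ioi t)) (nhds L) →
        Filter.limsup (fun k => |ρseq (φ k) t - ρ t - c|) atTop ≤ |ρ t - L|) ∧
      ∀ g : ℝ → ℂ, ContDiff ℝ (⊤ : ℕ∞) g → (∀ t, g (t + 2 * π) = g t) →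
        Tendsto
          (fun k => -∫ t in Set.Ioc (0:ℝ) (2 * π), deriv g t * (ρseq (φ k) t : ℂ))
          atTop
          (nhds (-∫ t in Set.Ioc (0:ℝ) (2 * π), deriv g t * (ρ t : ℂ))) := by
  have hπ : 0 < 2*π := by positivity
  obtain ⟨M, hM⟩ : ∃ M, ∀ x ∈ Icc (0:ℝ) 1, h x ≤ M := by
    obtain ⟨M, hMub⟩ := (isCompact_Icc.image_of_continuousOn hcont).bddAbove
    exact ⟨M, fun x hx => hMub ⟨x, hx, rfl⟩⟩
  have hM0 : 0 ≤ M := by have := hM 0 ⟨le_rfl, zero_le_one⟩; rwa [h0] at this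
  -- uniform bound on the primitives
  have key : ∀ n, ∀ q ∈ Ioc (0:ℝ) (2*π), |ρseq n q| ≤ M := by
    intro n q hq
    obtain ⟨h1, h2⟩ := hbd n q (2*π) hq.1 hq.2 le_rfl
    rw [(hprim n).2.2] at h1 h2
    have hx1 : (2*π - q)/(2*π) ∈ Icc (0:ℝ) 1 := by
      constructor
      · exact div_nonneg (by linarith [hq.2]) hπ.le
      · rw [div_le_one hπ]; linarith [hq.1]
    have hx2 : 1 - (2*π - q)/(2*π) ∈ Icc (0:ℝ) 1 := by
      constructor <;> [linarith [hx1.2]; linarith [hx1.1]]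
    have := hM _ hx1; have := hM _ hx2
    rw [abs_le]; constructor <;> linarith
  -- modulus of continuity at 0
  have ω : ∀ ε > 0, ∃ δ > 0, ∀ x : ℝ, 0 ≤ x → x ≤ 1 → x < δ → h x ≤ ε := by
    intro ε hε
    have hc := hcont 0 ⟨le_rfl, zero_le_one⟩
    rw [ContinuousWithinAt, Metric.tendsto_nhdsWithin_nhds] at hc
    obtain ⟨δ, hδ, hd⟩ := hc ε hε
    refine ⟨δ, hδ, fun x hx0 hx1 hxδ => ?_⟩
    have := hd ⟨hx0, hx1⟩ (by rw [Real.dist_eq, sub_zero, abs_of_nonneg hx0]; exact hxδ)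
    rw [Real.dist_eq, h0, sub_zero] at this
    exact le_of_lt (lt_of_abs_lt this)
  -- the countable dense set of rationals in (0, 2π)
  set Q : Set ℝ := {x : ℝ | (∃ r : ℚ, (r:ℝ) = x) ∧ 0 < x ∧ x < 2*π} with hQdef
  have hQsub : ∀ q ∈ Q, 0 < q ∧ q < 2*π := fun q hq => hq.2
  have hQdense : ∀ u v : ℝ, 0 ≤ u → u < v → v ≤ 2*π → ∃ q ∈ Q, u < q ∧ q < v := by
    intro u v hu huv hv
    obtain ⟨r, hr1, hr2⟩ := exists_rat_btwn huv
    exact ⟨r, ⟨⟨r, rfl⟩, lt_of_le_of_lt hu hr1, lt_of_lt_of_le hr2 hv⟩, hr1, hr2⟩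
  have hNeL : ∀ t, 0 < t → t ≤ 2*π → (𝓝[Q ∩ Iio t] t).NeBot := by
    intro t ht1 ht2
    rw [← mem_closure_iff_nhdsWithin_neBot, Metric.mem_closure_iff]
    intro ε hε
    obtain ⟨q, hqQ, hq1, hq2⟩ := hQdense (max (t - ε) 0) t (le_max_right _ _)
      (max_lt (by linarith) ht1) ht2
    refine ⟨q, ⟨hqQ, hq2⟩, ?_⟩
    rw [Real.dist_eq, abs_of_pos (by linarith)]
    linarith [lt_of_le_of_lt (le_max_left (t - ε) 0) hq1]
  have hNeR : ∀ t, 0 ≤ t → t < 2*π → (𝓝[Q ∩ Ioi t] t).NeBot := by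
    intro t ht1 ht2
    rw [← mem_closure_iff_nhdsWithin_neBot, Metric.mem_closure_iff]
    intro ε hε
    obtain ⟨q, hqQ, hq1, hq2⟩ := hQdense t (min (t + ε) (2*π)) ht1
      (lt_min (by linarith) ht2) (min_le_right _ _)
    refine ⟨q, ⟨hqQ, hq1⟩, ?_⟩
    rw [Real.dist_eq, abs_of_neg (by linarith)]
    linarith [lt_of_lt_of_le hq2 (min_le_left (t + ε) (2*π))]
  -- diagonal subsequence extraction
  obtain ⟨φ, hφ, hfQ'⟩ : ∃ φ : ℕ → ℕ, StrictMono φ ∧ ∀ q ∈ Q,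
      Tendsto (fun k => ρseq (φ k) q) atTop
        (𝓝 (limUnder atTop (fun k => ρseq (φ k) q))) := by
    set e : ℕ → ℝ := fun i => ((Denumerable.ofNat ℚ i : ℚ) : ℝ) with he
    set K : Set (ℕ → ℝ) := Set.univ.pi (fun _ => Icc (-(M+1)) (M+1)) with hK
    have hKcp : IsCompact K := isCompact_univ_pi (fun _ => isCompact_Icc)
    set v : ℕ → ℕ → ℝ := fun n i => max (-(M+1)) (min (M+1) (ρseq n (e i))) with hv
    have hvK : ∀ n, v n ∈ K := by
      intro n
      rw [hK, Set.mem_univ_pi]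
      intro i
      exact ⟨le_max_left _ _, max_le (by linarith) (min_le_left _ _)⟩
    obtain ⟨G, hGK, φ, hφ, hGtend⟩ := hKcp.tendsto_subseq hvK
    have hpt : ∀ i, Tendsto (fun k => v (φ k) i) atTop (𝓝 (G i)) := by
      intro i
      exact (tendsto_pi_nhds.mp hGtend) i
    refine ⟨φ, hφ, ?_⟩
    rintro q ⟨⟨r, rfl⟩, hq1, hq2⟩
    obtain ⟨i, hir⟩ : ∃ i, (Denumerable.ofNat ℚ i : ℚ) = r := ⟨_, Denumerable.ofNat_encode r⟩
    have hei : e i = (r:ℝ) := by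
      show ((Denumerable.ofNat ℚ i : ℚ) : ℝ) = (r:ℝ)
      exact_mod_cast congrArg (fun x : ℚ => (x:ℝ)) hir
    have hclamp : ∀ n, v n i = ρseq n (e i) := by
      intro n
      have hk := key n (e i) (by rw [hei]; exact ⟨hq1, hq2.le⟩)
      rcases abs_le.mp hk with ⟨hk1, hk2⟩
      rw [hv]; simp only
      rw [min_eq_right (by linarith), max_eq_right (by linarith)]
    have ht : Tendsto (fun k => ρseq (φ k) ((r:ℚ):ℝ)) atTop (𝓝 (G i)) := by
      have := hpt i
      simp_rw [hclamp, hei] at this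
      exact this
    rwa [ht.limUnder_eq]
  set f : ℝ → ℝ := fun q => limUnder atTop (fun k => ρseq (φ k) q) with hfdef
  have hfQ : ∀ q ∈ Q, Tendsto (fun k => ρseq (φ k) q) atTop (𝓝 (f q)) := hfQ'
  -- properties of f on Q
  have hfb : ∀ q ∈ Q, |f q| ≤ M := by
    intro q hq
    exact le_of_tendsto (hfQ q hq).abs
      (Eventually.of_forall fun k => key (φ k) q ⟨(hQsub q hq).1, (hQsub q hq).2.le⟩)
  have hfrise : ∀ q ∈ Q, ∀ r ∈ Q, q < r → f r - f q ≤ h ((r - q)/(2*π)) := by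
    intro q hq r hr hlt
    exact le_of_tendsto ((hfQ r hr).sub (hfQ q hq))
      (Eventually.of_forall fun k => (hbd (φ k) q r (hQsub q hq).1 hlt.le (hQsub r hr).2.le).1)
  have hfdrop : ∀ q ∈ Q, ∀ r ∈ Q, q < r → f q - f r ≤ h (1 - (r - q)/(2*π)) := by
    intro q hq r hr hlt
    exact le_of_tendsto ((hfQ q hq).sub (hfQ r hr))
      (Eventually.of_forall fun k => (hbd (φ k) q r (hQsub q hq).1 hlt.le (hQsub r hr).2.le).2)
  have hfmod : ∀ ε > 0, ∃ δ > 0, ∀ q ∈ Q, ∀ r ∈ Q, q < r → r - q < δ → f r ≤ f q + ε := by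
    intro ε hε
    obtain ⟨δ, hδ, hω⟩ := ω ε hε
    refine ⟨2*π*δ, by positivity, fun q hq r hr hlt hd => ?_⟩
    have h1 := hfrise q hq r hr hlt
    have h2 : h ((r - q)/(2*π)) ≤ ε := hω _ (div_nonneg (by linarith) hπ.le)
      ((div_le_one hπ).2 (by linarith [(hQsub r hr).2, (hQsub q hq).1]))
      ((div_lt_iff₀ hπ).2 (by linarith))
    linarith
  -- one-sided limits of f
  set Fm : ℝ → ℝ := fun t => limUnder (𝓝[Q ∩ Iio t] t) f with hFmdef
  have hFm : ∀ t, 0 < t → t ≤ 2*π → Tendsto f (𝓝[Q ∩ Iio t] t) (𝓝 (Fm t)) := by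
    intro t ht1 ht2
    haveI := hNeL t ht1 ht2
    obtain ⟨L, hL⟩ := exists_left_limit f Q t M (hNeL t ht1 ht2) hfb hfmod
    rw [hFmdef]; simp only
    rw [hL.limUnder_eq]; exact hL
  set Fp : ℝ → ℝ := fun t => limUnder (𝓝[Q ∩ Ioi t] t) f with hFpdef
  have hFp : ∀ t, 0 ≤ t → t < 2*π → Tendsto f (𝓝[Q ∩ Ioi t] t) (𝓝 (Fp t)) := by
    intro t ht1 ht2
    haveI := hNeR t ht1 ht2
    obtain ⟨L, hL⟩ := exists_right_limit f Q t M (hNeR t ht1 ht2) hfb hfmod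
    rw [hFpdef]; simp only
    rw [hL.limUnder_eq]; exact hL
  have hFmb : ∀ t, 0 < t → t ≤ 2*π → |Fm t| ≤ M := by
    intro t ht1 ht2
    haveI := hNeL t ht1 ht2
    apply le_of_tendsto (hFm t ht1 ht2).abs
    filter_upwards [self_mem_nhdsWithin] with q hq
    exact hfb q hq.1
  have hFmd : ∀ t, 0 < t → t ≤ 2*π → ∀ ε > 0, ∃ δ > 0,
      ∀ q ∈ Q, t - δ < q → q < t → |f q - Fm t| ≤ ε := by
    intro t ht1 ht2 ε hε
    obtain ⟨δ, hδ, hd⟩ := Metric.tendsto_nhdsWithin_nhds.mp (hFm t ht1 ht2) ε hε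
    refine ⟨δ, hδ, fun q hq hq1 hq2 => ?_⟩
    have := hd ⟨hq, hq2⟩ (by rw [Real.dist_eq, abs_lt]; constructor <;> linarith)
    rw [Real.dist_eq] at this
    exact this.le
  have hFpd : ∀ t, 0 ≤ t → t < 2*π → ∀ ε > 0, ∃ δ > 0,
      ∀ q ∈ Q, t < q → q < t + δ → |f q - Fp t| ≤ ε := by
    intro t ht1 ht2 ε hε
    obtain ⟨δ, hδ, hd⟩ := Metric.tendsto_nhdsWithin_nhds.mp (hFp t ht1 ht2) ε hε
    refine ⟨δ, hδ, fun q hq hq1 hq2 => ?_⟩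
    have := hd ⟨hq, hq1⟩ (by rw [Real.dist_eq, abs_lt]; constructor <;> linarith)
    rw [Real.dist_eq] at this
    exact this.le
  have hpickL : ∀ t, 0 < t → t ≤ 2*π → ∀ ε > 0, ∀ δ > 0,
      ∃ q ∈ Q, t - δ < q ∧ q < t ∧ |f q - Fm t| ≤ ε := by
    intro t ht1 ht2 ε hε δ hδ
    obtain ⟨δ', hδ', hd⟩ := hFmd t ht1 ht2 ε hε
    obtain ⟨q, hqQ, hq1, hq2⟩ := hQdense (max (t - min δ δ') 0) t (le_max_right _ _)
      (max_lt (by have := lt_min hδ hδ'; linarith) ht1) ht2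
    have h1 : t - min δ δ' < q := lt_of_le_of_lt (le_max_left _ _) hq1
    exact ⟨q, hqQ, by have := min_le_left δ δ'; linarith, hq2,
      hd q hqQ (by have := min_le_right δ δ'; linarith) hq2⟩
  have hpickR : ∀ t, 0 ≤ t → t < 2*π → ∀ ε > 0, ∀ δ > 0,
      ∃ q ∈ Q, t < q ∧ q < t + δ ∧ |f q - Fp t| ≤ ε := by
    intro t ht1 ht2 ε hε δ hδ
    obtain ⟨δ', hδ', hd⟩ := hFpd t ht1 ht2 ε hε
    obtain ⟨q, hqQ, hq1, hq2⟩ := hQdense t (min (t + min δ δ') (2*π)) ht1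
      (lt_min (by have := lt_min hδ hδ'; linarith) ht2) (min_le_right _ _)
    have h1 : q < t + min δ δ' := lt_of_lt_of_le hq2 (min_le_left _ _)
    exact ⟨q, hqQ, hq1, by have := min_le_left δ δ'; linarith,
      hd q hqQ hq1 (by have := min_le_right δ δ'; linarith)⟩
  -- the limit primitive
  set a := Fm (2*π) with hadef
  set ρ₀ : ℝ → ℝ := fun t => if 0 < t ∧ t ≤ 2*π then Fm t - a else 0 with hρ₀def
  have hρval : ∀ t, 0 < t → t ≤ 2*π → ρ₀ t = Fm t - a := by
    intro t h1 h2; rw [hρ₀def]; simp only; rw [if_pos ⟨h1, h2⟩]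
  have hleft : ∀ t, 0 < t → t ≤ 2*π → Tendsto ρ₀ (𝓝[Iio t] t) (𝓝 (ρ₀ t)) := by
    intro t ht1 ht2
    rw [Metric.tendsto_nhdsWithin_nhds]
    intro ε hε
    obtain ⟨δ, hδ, hd⟩ := hFmd t ht1 ht2 (ε/3) (by linarith)
    refine ⟨min δ (t/2), lt_min hδ (by linarith), ?_⟩
    intro s hs hsd
    rw [Real.dist_eq] at hsd
    have hs1 : s < t := hs
    have hs2 : t - min δ (t/2) < s := by
      rcases abs_lt.mp hsd with ⟨e1, e2⟩; linarith
    have hs0 : 0 < s := by have := min_le_right δ (t/2); linarith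
    have hsπ : s ≤ 2*π := by linarith
    haveI := hNeL s hs0 hsπ
    have hev : ∀ᶠ q in 𝓝[Q ∩ Iio s] s, |f q - Fm t| ≤ ε/3 := by
      have hmem : Ioi (t - δ) ∈ 𝓝[Q ∩ Iio s] s :=
        nhdsWithin_le_nhds (Ioi_mem_nhds (by have := min_le_left δ (t/2); linarith))
      filter_upwards [hmem, self_mem_nhdsWithin] with q hq1 hq2
      exact hd q hq2.1 hq1 (lt_trans hq2.2 hs1)
    have hub : Fm s ≤ Fm t + ε/3 := le_of_tendsto (hFm s hs0 hsπ)
      (by filter_upwards [hev] with q hq; linarith [(abs_le.mp hq).2])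
    have hlb : Fm t - ε/3 ≤ Fm s := ge_of_tendsto (hFm s hs0 hsπ)
      (by filter_upwards [hev] with q hq; linarith [(abs_le.mp hq).1])
    rw [hρval s hs0 hsπ, hρval t ht1 ht2, Real.dist_eq]
    rw [show Fm s - a - (Fm t - a) = Fm s - Fm t by ring, abs_lt]
    constructor <;> linarith
  have hright : ∀ t, 0 ≤ t → t < 2*π → Tendsto ρ₀ (𝓝[Ioi t] t) (𝓝 (Fp t - a)) := by
    intro t ht1 ht2
    rw [Metric.tendsto_nhdsWithin_nhds]
    intro ε hε
    obtain ⟨δ, hδ, hd⟩ := hFpd t ht1 ht2 (ε/3) (by linarith)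
    refine ⟨min δ ((2*π - t)/2), lt_min hδ (by linarith), ?_⟩
    intro s hs hsd
    rw [Real.dist_eq] at hsd
    have hs1 : t < s := hs
    have hs2 : s < t + min δ ((2*π - t)/2) := by
      rcases abs_lt.mp hsd with ⟨e1, e2⟩; linarith
    have hs0 : 0 < s := lt_of_le_of_lt ht1 hs1
    have hsπ : s ≤ 2*π := by have := min_le_right δ ((2*π - t)/2); linarith
    haveI := hNeL s hs0 hsπ
    have hev : ∀ᶠ q in 𝓝[Q ∩ Iio s] s, |f q - Fp t| ≤ ε/3 := by
      have hmem : Ioi t ∈ 𝓝[Q ∩ Iio s] s := nhdsWithin_le_nhds (Ioi_mem_nhds hs1)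
      filter_upwards [hmem, self_mem_nhdsWithin] with q hq1 hq2
      have hq2' : q < s := hq2.2
      exact hd q hq2.1 hq1 (by have := min_le_left δ ((2*π - t)/2); linarith)
    have hub : Fm s ≤ Fp t + ε/3 := le_of_tendsto (hFm s hs0 hsπ)
      (by filter_upwards [hev] with q hq; linarith [(abs_le.mp hq).2])
    have hlb : Fp t - ε/3 ≤ Fm s := ge_of_tendsto (hFm s hs0 hsπ)
      (by filter_upwards [hev] with q hq; linarith [(abs_le.mp hq).1])
    rw [hρval s hs0 hsπ, Real.dist_eq]
    rw [show Fm s - a - (Fp t - a) = Fm s - Fp t by ring, abs_lt]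
    constructor <;> linarith
  have hjumpbound : ∀ t, 0 < t → t < 2*π → ∀ ε > 0,
      ∀ᶠ k in atTop, ρseq (φ k) t ≤ Fm t + ε ∧ Fp t - ε ≤ ρseq (φ k) t := by
    intro t ht1 ht2 ε hε
    obtain ⟨δh, hδh, hωh⟩ := ω (ε/3) (by linarith)
    obtain ⟨q, hqQ, hq1, hq2, hq3⟩ := hpickL t ht1 ht2.le (ε/3) (by linarith)
      (min (2*π*δh) t) (lt_min (by positivity) ht1)
    obtain ⟨r, hrQ, hr1, hr2, hr3⟩ := hpickR t ht1.le ht2 (ε/3) (by linarith)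
      (min (2*π*δh) (2*π - t)) (lt_min (by positivity) (by linarith))
    have hq0 : 0 < q := (hQsub q hqQ).1
    have hbq : ∀ n, ρseq n t - ρseq n q ≤ ε/3 := by
      intro n
      have hB := (hbd n q t hq0 hq2.le ht2.le).1
      have h2 : h ((t - q)/(2*π)) ≤ ε/3 := hωh _ (div_nonneg (by linarith) hπ.le)
        ((div_le_one hπ).2 (by linarith)) ((div_lt_iff₀ hπ).2 (by
          have := min_le_left (2*π*δh) t; linarith))
      linarith
    have hbr : ∀ n, ρseq n r - ρseq n t ≤ ε/3 := by
      intro n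
      have hB := (hbd n t r ht1 hr1.le (hQsub r hrQ).2.le).1
      have h2 : h ((r - t)/(2*π)) ≤ ε/3 := hωh _ (div_nonneg (by linarith) hπ.le)
        ((div_le_one hπ).2 (by linarith [(hQsub r hrQ).2])) ((div_lt_iff₀ hπ).2 (by
          have := min_le_left (2*π*δh) (2*π - t); linarith))
      linarith
    have hcq := Metric.tendsto_nhds.mp (hfQ q hqQ) (ε/3) (by linarith)
    have hcr := Metric.tendsto_nhds.mp (hfQ r hrQ) (ε/3) (by linarith)
    filter_upwards [hcq, hcr] with k hk1 hk2
    rw [Real.dist_eq] at hk1 hk2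
    rcases abs_lt.mp hk1 with ⟨e1, e2⟩; rcases abs_lt.mp hk2 with ⟨e3, e4⟩
    rcases abs_le.mp hq3 with ⟨e5, e6⟩; rcases abs_le.mp hr3 with ⟨e7, e8⟩
    exact ⟨by linarith [hbq (φ k)], by linarith [hbr (φ k)]⟩
  have hFpleFm : ∀ t, 0 < t → t < 2*π → Fp t ≤ Fm t := by
    intro t ht1 ht2
    apply le_add_eps; intro ε hε
    obtain ⟨k, hk⟩ := (hjumpbound t ht1 ht2 (ε/2) (by linarith)).exists
    linarith [hk.1, hk.2]
  have hpick2 : ∀ s t, 0 < s → s < t → t ≤ 2*π → ∀ γ > 0,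
      ∃ q ∈ Q, ∃ r ∈ Q, q < r ∧ |f q - Fm s| ≤ γ ∧ |f r - Fm t| ≤ γ ∧
        |(r - q) - (t - s)| < γ := by
    intro s t hs hst ht γ hγ
    set δ := min γ (t - s) with hδdef
    have hδ : 0 < δ := lt_min hγ (by linarith)
    obtain ⟨q, hqQ, hq1, hq2, hq3⟩ := hpickL s hs (by linarith) γ hγ (δ/2) (by linarith)
    obtain ⟨r, hrQ, hr1, hr2, hr3⟩ := hpickL t (by linarith) ht γ hγ (δ/2) (by linarith)
    have hd2 := min_le_right γ (t - s)
    have hd1 := min_le_left γ (t - s)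
    have hqr : q < r := by linarith
    refine ⟨q, hqQ, r, hrQ, hqr, hq3, hr3, ?_⟩
    rw [abs_lt]; constructor <;> linarith
  have harc : ArcBound h ρ₀ := by
    intro s t hs hst ht
    have hρs := hρval s hs (le_trans hst ht)
    have hρt := hρval t (lt_of_lt_of_le hs hst) ht
    rcases eq_or_lt_of_le hst with rfl | hlt
    · constructor
      · simp only [sub_self, zero_div, h0, le_refl]
      · simp only [sub_self, zero_div, sub_zero]
        exact hpos 1 ⟨zero_le_one, le_rfl⟩
    · have hx₀ : (t - s)/(2*π) ∈ Icc (0:ℝ) 1 := by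
        constructor
        · exact div_nonneg (by linarith) hπ.le
        · rw [div_le_one hπ]; linarith
      rw [hρs, hρt]
      constructor
      · rw [show Fm t - a - (Fm s - a) = Fm t - Fm s by ring]
        apply le_add_eps; intro ε hε
        have hc := hcont _ hx₀
        rw [ContinuousWithinAt, Metric.tendsto_nhdsWithin_nhds] at hc
        obtain ⟨δ₂, hδ₂, hc⟩ := hc (ε/3) (by linarith)
        obtain ⟨q, hqQ, r, hrQ, hqr, hq3, hr3, hd3⟩ := hpick2 s t hs hlt ht
          (min (ε/3) (2*π*δ₂)) (lt_min (by linarith) (by positivity))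
        have hy : (r - q)/(2*π) ∈ Icc (0:ℝ) 1 := by
          constructor
          · exact div_nonneg (by linarith) hπ.le
          · rw [div_le_one hπ]; linarith [(hQsub r hrQ).2, (hQsub q hqQ).1]
        have hydist : dist ((r - q)/(2*π)) ((t - s)/(2*π)) < δ₂ := by
          rw [Real.dist_eq, show ((r-q)/(2*π) - (t-s)/(2*π)) = ((r-q) - (t-s))/(2*π) by ring,
            abs_div, abs_of_pos hπ, div_lt_iff₀ hπ]
          have := min_le_right (ε/3) (2*π*δ₂)
          calc |r - q - (t - s)| < min (ε/3) (2*π*δ₂) := hd3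
            _ ≤ 2*π*δ₂ := this
            _ = δ₂ * (2*π) := by ring
        have hhy := hc hy hydist
        rw [Real.dist_eq] at hhy
        have h5 := hfrise q hqQ r hrQ hqr
        have h6 := min_le_left (ε/3) (2*π*δ₂)
        rcases abs_le.mp hq3 with ⟨e1, e2⟩
        rcases abs_le.mp hr3 with ⟨e3, e4⟩
        rcases abs_lt.mp hhy with ⟨e5, e6⟩
        linarith
      · rw [show Fm s - a - (Fm t - a) = Fm s - Fm t by ring]
        apply le_add_eps; intro ε hε
        have hx₁ : 1 - (t - s)/(2*π) ∈ Icc (0:ℝ) 1 := by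
          constructor <;> [linarith [hx₀.2]; linarith [hx₀.1]]
        have hc := hcont _ hx₁
        rw [ContinuousWithinAt, Metric.tendsto_nhdsWithin_nhds] at hc
        obtain ⟨δ₂, hδ₂, hc⟩ := hc (ε/3) (by linarith)
        obtain ⟨q, hqQ, r, hrQ, hqr, hq3, hr3, hd3⟩ := hpick2 s t hs hlt ht
          (min (ε/3) (2*π*δ₂)) (lt_min (by linarith) (by positivity))
        have hy : 1 - (r - q)/(2*π) ∈ Icc (0:ℝ) 1 := by
          have : (r - q)/(2*π) ∈ Icc (0:ℝ) 1 := by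
            constructor
            · exact div_nonneg (by linarith) hπ.le
            · rw [div_le_one hπ]; linarith [(hQsub r hrQ).2, (hQsub q hqQ).1]
          constructor <;> [linarith [this.2]; linarith [this.1]]
        have hydist : dist (1 - (r - q)/(2*π)) (1 - (t - s)/(2*π)) < δ₂ := by
          rw [Real.dist_eq]
          rw [show (1 - (r-q)/(2*π) - (1 - (t-s)/(2*π))) = ((t-s) - (r-q))/(2*π) by ring]
          rw [abs_div, abs_of_pos hπ, div_lt_iff₀ hπ]
          have h7 := min_le_right (ε/3) (2*π*δ₂)
          have h8 : |t - s - (r - q)| = |r - q - (t - s)| := by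
            rw [abs_sub_comm]
          calc |t - s - (r - q)| = |r - q - (t - s)| := h8
            _ < min (ε/3) (2*π*δ₂) := hd3
            _ ≤ 2*π*δ₂ := h7
            _ = δ₂ * (2*π) := by ring
        have hhy := hc hy hydist
        rw [Real.dist_eq] at hhy
        have h5 := hfdrop q hqQ r hrQ hqr
        have h6 := min_le_left (ε/3) (2*π*δ₂)
        rcases abs_le.mp hq3 with ⟨e1, e2⟩
        rcases abs_le.mp hr3 with ⟨e3, e4⟩
        rcases abs_lt.mp hhy with ⟨e5, e6⟩
        linarith
  -- countability of the jump set
  set Jset : Set ℝ := {t | (0 < t ∧ t < 2*π) ∧ Fp t < Fm t} with hJdef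
  have hJc : Jset.Countable := by
    have hw : ∀ t : ℝ, t ∈ Jset → ∃ pw : ℚ × ℚ × ℚ,
        ((pw.1 : ℝ) < t ∧ t < (pw.2.1 : ℝ)) ∧
        (∀ q ∈ Q, ∀ r ∈ Q, (pw.1:ℝ) < q → q < r → r < (pw.2.1:ℝ) →
          f r ≤ f q + (Fm t - Fp t)/2) ∧
        (Fm t - (Fm t - Fp t)/4 < (pw.2.2:ℝ) ∧ (pw.2.2:ℝ) < Fm t) := by
      rintro t ⟨⟨ht1, ht2⟩, hJ⟩
      obtain ⟨δh, hδh, hωh⟩ := ω ((Fm t - Fp t)/2) (by linarith)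
      obtain ⟨p, hp1, hp2⟩ := exists_rat_btwn (show t - π*δh < t by nlinarith [Real.pi_pos])
      obtain ⟨p', hp'1, hp'2⟩ := exists_rat_btwn (show t < t + π*δh by nlinarith [Real.pi_pos])
      obtain ⟨w, hw1, hw2⟩ := exists_rat_btwn (show Fm t - (Fm t - Fp t)/4 < Fm t by linarith)
      refine ⟨(p, p', w), ⟨hp2, hp'1⟩, ?_, hw1, hw2⟩
      intro q hqQ r hrQ hq hqr hr
      have h5 := hfrise q hqQ r hrQ hqr
      have hb : h ((r - q)/(2*π)) ≤ (Fm t - Fp t)/2 := hωh _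
        (div_nonneg (by linarith) hπ.le)
        ((div_le_one hπ).2 (by linarith [(hQsub r hrQ).2, (hQsub q hqQ).1]))
        ((div_lt_iff₀ hπ).2 (by nlinarith))
      linarith
    choose! W hW using hw
    have key2 : ∀ t1 ∈ Jset, ∀ t2 ∈ Jset, W t1 = W t2 → t1 < t2 → False := by
      intro t1 h1 t2 h2 heq hlt
      obtain ⟨⟨ht11, ht12⟩, hJ1⟩ := h1
      obtain ⟨⟨ht21, ht22⟩, hJ2⟩ := h2
      obtain ⟨⟨hp1, hp2⟩, hrise1, hw11, hw12⟩ := hW t1 ⟨⟨ht11, ht12⟩, hJ1⟩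
      obtain ⟨⟨hp1', hp2'⟩, hrise2, hw21, hw22⟩ := hW t2 ⟨⟨ht21, ht22⟩, hJ2⟩
      rw [← heq] at hp1' hp2' hw21 hw22
      have hclaim : Fm t2 ≤ Fp t1 + (Fm t1 - Fp t1)/2 := by
        apply le_add_eps; intro ε hε
        obtain ⟨q, hqQ, hq1, hq2, hq3⟩ := hpickR t1 ht11.le ht12 (ε/2) (by linarith)
          ((t2 - t1)/2) (by linarith)
        obtain ⟨r, hrQ, hr1, hr2, hr3⟩ := hpickL t2 ht21 ht22.le (ε/2) (by linarith)
          ((t2 - t1)/2) (by linarith)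
        have hqr : q < r := by linarith
        have h5 := hrise1 q hqQ r hrQ (by linarith) hqr (by linarith)
        rcases abs_le.mp hq3 with ⟨e1, e2⟩
        rcases abs_le.mp hr3 with ⟨e3, e4⟩
        linarith
      linarith
    have hinj : Set.InjOn W Jset := by
      intro t1 h1 t2 h2 heq
      rcases lt_trichotomy t1 t2 with hc | hc | hc
      · exact absurd (key2 t1 h1 t2 h2 heq hc) (by simp)
      · exact hc
      · exact absurd (key2 t2 h2 t1 h1 heq.symm hc) (by simp)
    obtain ⟨g, hg⟩ := exists_injective_nat (ℚ × ℚ × ℚ)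
    exact Set.countable_iff_exists_injOn.mpr ⟨g ∘ W, fun x hx y hy e => hinj hx hy (hg e)⟩
  have haec : ∀ t, 0 < t → t < 2*π → t ∉ Jset →
      Tendsto (fun k => ρseq (φ k) t) atTop (𝓝 (Fm t)) := by
    intro t ht1 ht2 htJ
    have hFpeq : Fm t ≤ Fp t := by
      by_contra hc
      exact htJ ⟨⟨ht1, ht2⟩, not_le.mp hc⟩
    rw [Metric.tendsto_nhds]
    intro ε hε
    filter_upwards [hjumpbound t ht1 ht2 (ε/2) (by linarith)] with k hk
    rw [Real.dist_eq, abs_lt]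
    exact ⟨by linarith [hk.2], by linarith [hk.1]⟩
  refine ⟨φ, hφ, a, ρ₀, ⟨fun t ht => hleft t ht.1 ht.2,
    fun t ht => ⟨Fp t - a, hright t ht.1 ht.2⟩,
    by rw [hρval (2*π) hπ le_rfl, ← hadef, sub_self]⟩, harc, ?_, ?_⟩
  · -- limsup bound through the jump
    intro t ht L hL
    obtain ⟨ht1, ht2⟩ := ht
    have hLa : L = Fp t - a := tendsto_nhds_unique hL (hright t ht1.le ht2)
    have hρt := hρval t ht1 ht2.le
    have hfp := hFpleFm t ht1 ht2
    have habs : (fun k => |ρseq (φ k) t - ρ₀ t - a|) = fun k => |ρseq (φ k) t - Fm t| := by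
      funext k; rw [hρt]; congr 1; ring
    rw [habs, hLa, hρt]
    rw [show Fm t - a - (Fp t - a) = Fm t - Fp t by ring, abs_of_nonneg (by linarith)]
    apply le_add_eps; intro ε hε
    have hco : IsCoboundedUnder (· ≤ ·) atTop (fun k => |ρseq (φ k) t - Fm t|) :=
      isCoboundedUnder_le_of_le atTop (fun k => abs_nonneg _)
    apply Filter.limsup_le_of_le hco
    filter_upwards [hjumpbound t ht1 ht2 (ε/2) (by linarith)] with k hk
    rw [abs_le]
    exact ⟨by linarith [hk.2], by linarith [hk.1]⟩
  · -- convergence of integrals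
    intro g hg hper
    have hdg : Continuous (deriv g) := hg.continuous_deriv (by simp)
    have hI : MeasurableSet (Ioc (0:ℝ) (2*π)) := measurableSet_Ioc
    have hρmeas : AEMeasurable ρ₀ (volume.restrict (Ioc 0 (2*π))) :=
      aemeas_of_leftCont ρ₀ _ hI (fun t ht => hleft t ht.1 ht.2)
    have hρkmeas : ∀ n, AEMeasurable (ρseq n) (volume.restrict (Ioc 0 (2*π))) :=
      fun n => aemeas_of_leftCont (ρseq n) _ hI (fun t ht => (hprim n).1 t ht)
    have hbound_int : Integrable (fun t => ‖deriv g t‖ * (2*M))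
        (volume.restrict (Ioc 0 (2*π))) :=
      (hdg.norm.mul continuous_const).integrableOn_Ioc
    have hFk_meas : ∀ k, AEStronglyMeasurable (fun t => deriv g t * (ρseq (φ k) t : ℂ))
        (volume.restrict (Ioc 0 (2*π))) := fun k =>
      (hdg.aestronglyMeasurable).mul
        ((Complex.measurable_ofReal.comp_aemeasurable (hρkmeas (φ k))).aestronglyMeasurable)
    have hρbd : ∀ t ∈ Ioc (0:ℝ) (2*π), |ρ₀ t| ≤ 2*M := by
      intro t ht
      rw [hρval t ht.1 ht.2]
      have h1 := hFmb t ht.1 ht.2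
      have h2 := hFmb (2*π) hπ le_rfl
      rw [← hadef] at h2
      calc |Fm t - a| ≤ |Fm t| + |a| := abs_sub _ _
        _ ≤ 2*M := by linarith
    have h_bound : ∀ k, ∀ᵐ t ∂(volume.restrict (Ioc (0:ℝ) (2*π))),
        ‖deriv g t * (ρseq (φ k) t : ℂ)‖ ≤ ‖deriv g t‖ * (2*M) := by
      intro k
      filter_upwards [ae_restrict_mem hI] with t ht
      rw [norm_mul, Complex.norm_real, Real.norm_eq_abs]
      exact mul_le_mul_of_nonneg_left ((key (φ k) t ht).trans (by linarith)) (norm_nonneg _)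
    have hJnull : volume Jset = 0 := hJc.measure_zero _
    have h_lim : ∀ᵐ t ∂(volume.restrict (Ioc (0:ℝ) (2*π))),
        Tendsto (fun k => deriv g t * (ρseq (φ k) t : ℂ)) atTop
          (𝓝 (deriv g t * ((ρ₀ t : ℂ) + (a:ℂ)))) := by
      have h1 : ∀ᵐ t : ℝ ∂volume, t ∉ Jset := by
        rw [ae_iff]
        simpa using hJnull
      have h2 : ∀ᵐ t : ℝ ∂volume, t ≠ 2*π := by
        rw [ae_iff]
        simpa using Real.volume_singleton (a := 2*π)
      filter_upwards [ae_restrict_mem hI, ae_restrict_of_ae h1, ae_restrict_of_ae h2]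
        with t ht htJ htπ
      have ht2 : t < 2*π := lt_of_le_of_ne ht.2 htπ
      have hto : Tendsto (fun k => ρseq (φ k) t) atTop (𝓝 (Fm t)) := haec t ht.1 ht2 htJ
      have htoC : Tendsto (fun k => (ρseq (φ k) t : ℂ)) atTop (𝓝 ((Fm t : ℂ))) :=
        (Complex.continuous_ofReal.tendsto _).comp hto
      have heq : ((Fm t : ℝ) : ℂ) = (ρ₀ t : ℂ) + (a : ℂ) := by
        rw [hρval t ht.1 ht.2]; push_cast; ring
      rw [← heq]
      exact tendsto_const_nhds.mul htoC
    have hDCT := tendsto_integral_of_dominated_convergence _ hFk_meas hbound_int h_bound h_lim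
    have hρint : Integrable (fun t => deriv g t * (ρ₀ t : ℂ))
        (volume.restrict (Ioc 0 (2*π))) := by
      apply Integrable.mono' hbound_int
      · exact (hdg.aestronglyMeasurable).mul
          ((Complex.measurable_ofReal.comp_aemeasurable hρmeas).aestronglyMeasurable)
      · filter_upwards [ae_restrict_mem hI] with t ht
        rw [norm_mul, Complex.norm_real, Real.norm_eq_abs]
        exact mul_le_mul_of_nonneg_left (hρbd t ht) (norm_nonneg _)
    have haint : Integrable (fun t => deriv g t * (a:ℂ))
        (volume.restrict (Ioc 0 (2*π))) :=
      (hdg.mul continuous_const).integrableOn_Ioc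
    have hsplit : ∫ t in Ioc (0:ℝ) (2*π), deriv g t * ((ρ₀ t : ℂ) + (a:ℂ)) =
        (∫ t in Ioc (0:ℝ) (2*π), deriv g t * (ρ₀ t : ℂ)) +
          ∫ t in Ioc (0:ℝ) (2*π), deriv g t * (a:ℂ) := by
      rw [← integral_add hρint haint]
      congr 1; funext t; ring
    have hzero : ∫ t in Ioc (0:ℝ) (2*π), deriv g t * (a:ℂ) = 0 := by
      rw [integral_mul_const]
      have hie : ∫ t in Ioc (0:ℝ) (2*π), deriv g t =
          ∫ t in (0:ℝ)..(2*π), deriv g t := (intervalIntegral.integral_of_le hπ.le).symm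
      have hftc : ∫ t in (0:ℝ)..(2*π), deriv g t = g (2*π) - g 0 :=
        intervalIntegral.integral_deriv_eq_sub
          (fun x _ => (hg.differentiable (by simp)).differentiableAt)
          (hdg.intervalIntegrable 0 (2*π))
      have hgp : g (2*π) = g 0 := by have := hper 0; rwa [zero_add] at this
      rw [hie, hftc, hgp, sub_self, zero_mul]
    rw [hsplit, hzero, add_zero] at hDCT
    exact hDCT.neg
end
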